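/- Let x > 0 be fixed, let c : ℝ₊ → ℝ satisfy limsup_{y→∞} c(y)²/y < ∞, and let K_N(t,x) be the generalized Post-Widder kernel. Then for each δ ∈ (0,1) there exist N₀ ∈ ℕ and a constant C > 0 (independent of N) such that for all N > N₀ and r ∈ {0,1,2}: ∫_{|t−1|≥δ, t≥0} t^r · |K_N(t,x)| dt ≤ C · exp(N·(ln(1+δ) − δ)/8). -/

import Mathlib

/-!
Write `z = N + i x c(N/x)`, so that `|K_N(t)| = |z|^(N+1) / N! · (t e^(-t))^N` for `t ≥ 0`.
The growth condition on `c` gives `|z|^(N+1) ≤ N^(N+1) e^B`, and `N^N / N! ≤ e^N`.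
Away from `t = 1` we have `t e^(-t) ≤ e^(-1-η)` with `η = δ - log(1+δ) > 0`, since
`t - 1 - log t` is monotone on either side of `1` and is larger at `1 - δ` than at `1 + δ`.
Keeping one factor `t e^(-t)` for integrability, the integral is at most
`e^(B+1+η) (r+1)! · N e^(-ηN)`, and `N e^(-ηN) ≤ 8/(7η) · e^(-ηN/8)`.
-/

open MeasureTheory Real Set Filter Nat

lemma two_mul_le_log_one_add_sub_log_one_sub {δ : ℝ} (h0 : 0 ≤ δ) (h1 : δ < 1) :
    2 * δ ≤ log (1 + δ) - log (1 - δ) := by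
  have hs := hasSum_log_sub_log_of_abs_lt_one (x := δ) (by rwa [abs_of_nonneg h0])
  simpa using le_hasSum hs 0 fun k _ => by positivity

lemma sub_sub_log_le_of_one_le_of_le {s t : ℝ} (hs : 1 ≤ s) (hst : s ≤ t) :
    s - 1 - log s ≤ t - 1 - log t := by
  have hs0 : 0 < s := by linarith
  have hlog := log_le_sub_one_of_pos (div_pos (hs0.trans_le hst) hs0)
  rw [log_div (by linarith) hs0.ne'] at hlog
  have : t / s - 1 ≤ t - s := by
    rw [div_sub_one hs0.ne', div_le_iff₀ hs0]; nlinarith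
  linarith

lemma sub_sub_log_le_of_le_of_le_one {s t : ℝ} (ht : 0 < t) (hts : t ≤ s) (hs : s ≤ 1) :
    s - 1 - log s ≤ t - 1 - log t := by
  have hs0 : 0 < s := ht.trans_le hts
  have hlog := one_sub_inv_le_log_of_pos (div_pos hs0 ht)
  rw [log_div hs0.ne' ht.ne', inv_div] at hlog
  have : s - t ≤ 1 - t / s := by
    rw [one_sub_div hs0.ne', le_div_iff₀ hs0]; nlinarith
  linarith

lemma sub_log_one_add_le_sub_sub_log {δ t : ℝ} (hδ0 : 0 ≤ δ) (hδ1 : δ < 1) (ht : 0 < t)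
    (hsep : δ ≤ |t - 1|) : δ - log (1 + δ) ≤ t - 1 - log t := by
  rcases le_abs'.mp hsep with hle | hge
  · have hmono := sub_sub_log_le_of_le_of_le_one ht (by linarith) (by linarith : 1 - δ ≤ 1)
    have := two_mul_le_log_one_add_sub_log_one_sub hδ0 hδ1
    linarith
  · simpa using
      sub_sub_log_le_of_one_le_of_le (by linarith : 1 ≤ 1 + δ) (by linarith : 1 + δ ≤ t)

lemma mul_exp_neg_le_of_le_abs_sub_one {δ t : ℝ} (hδ0 : 0 ≤ δ) (hδ1 : δ < 1) (ht : 0 ≤ t)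
    (hsep : δ ≤ |t - 1|) : t * exp (-t) ≤ exp (-(1 + (δ - log (1 + δ)))) := by
  rcases ht.eq_or_lt with rfl | ht
  · simpa using (exp_pos _).le
  rw [← exp_log ht, ← exp_add, exp_log ht]
  have := sub_log_one_add_le_sub_sub_log hδ0 hδ1 ht hsep
  exact exp_le_exp.mpr (by linarith)

lemma mul_exp_neg_mul_le {ε η : ℝ} (hεη : ε < η) (y : ℝ) :
    y * exp (-(η * y)) ≤ exp (-(ε * y)) / (η - ε) := by
  rw [le_div_iff₀ (sub_pos.mpr hεη)]
  calc y * exp (-(η * y)) * (η - ε) = (η - ε) * y * exp (-(η * y)) := by ring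
    _ ≤ exp ((η - ε) * y) * exp (-(η * y)) := by
        gcongr
        linarith [add_one_le_exp ((η - ε) * y)]
    _ = exp (-(ε * y)) := by rw [← exp_add]; ring_nf

lemma integrableOn_exp_neg_mul_pow_Ioi (n : ℕ) :
    IntegrableOn (fun t : ℝ => exp (-t) * t ^ n) (Ioi 0) := by
  simpa [rpow_natCast] using GammaIntegral_convergent (s := n + 1) (by positivity)

lemma integral_exp_neg_mul_pow_Ioi (n : ℕ) : ∫ t in Ioi (0 : ℝ), exp (-t) * t ^ n = n ! := by
  have := Gamma_eq_integral (s := n + 1) (by positivity)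
  rw [Gamma_nat_eq_factorial] at this
  simpa [rpow_natCast] using this.symm

lemma exists_sq_mul_le_of_isBoundedUnder {c : ℝ → ℝ}
    (hc : IsBoundedUnder (· ≤ ·) atTop fun y => c y ^ 2 / y) {x : ℝ} (hx : 0 < x) :
    ∃ (B : ℝ) (N₀ : ℕ), ∀ N : ℕ, N₀ < N → (x * c (N / x)) ^ 2 ≤ B * N := by
  obtain ⟨B₀, hB₀⟩ := hc
  obtain ⟨y₀, hy₀⟩ := eventually_atTop.mp (eventually_map.mp hB₀)
  refine ⟨x * B₀, ⌈x * y₀⌉₊, fun N hN => ?_⟩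
  have hNx : 0 < (N : ℝ) / x := div_pos (by exact_mod_cast (Nat.zero_le _).trans_lt hN) hx
  have hy : y₀ ≤ N / x := by
    rw [le_div_iff₀ hx, mul_comm]
    exact (Nat.le_ceil _).trans (by exact_mod_cast hN.le)
  have hc2 := (div_le_iff₀ hNx).mp (hy₀ _ hy)
  calc (x * c (N / x)) ^ 2 = x ^ 2 * c (N / x) ^ 2 := by ring
    _ ≤ x ^ 2 * (B₀ * (N / x)) := by gcongr
    _ = x * B₀ * N := by field_simp

noncomputable def postWidderKernel (z : ℂ) (N : ℕ) (t : ℝ) : ℂ :=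
  z ^ (N + 1) / (N ! : ℂ) * (t : ℂ) ^ N * Complex.exp (-z * t)

lemma norm_postWidderKernel (z : ℂ) (N : ℕ) {t : ℝ} (ht : 0 ≤ t) :
    ‖postWidderKernel z N t‖ = ‖z‖ ^ (N + 1) / N ! * t ^ N * exp (-(z.re * t)) := by
  simp [postWidderKernel, Complex.norm_exp, abs_of_nonneg ht]

section Kernel

variable {z : ℂ} {N : ℕ} {b η : ℝ}

lemma norm_pow_succ_le_of_sq_im_le (hN : N ≠ 0) (hre : z.re = N)
    (him : z.im ^ 2 ≤ b * N) : ‖z‖ ^ (N + 1) ≤ N ^ (N + 1) * exp b := by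
  have hN0 : (0 : ℝ) < N := by positivity
  have hb : 0 ≤ b := nonneg_of_mul_nonneg_left ((sq_nonneg _).trans him) hN0
  have hsq : ‖z‖ ^ 2 ≤ (N * exp (b / (2 * N))) ^ 2 := by
    have hexp : (N * exp (b / (2 * N))) ^ 2 = N ^ 2 * exp (b / N) := by
      rw [mul_pow, ← exp_nat_mul]; push_cast; field_simp
    rw [Complex.sq_norm, Complex.normSq_apply, hre, hexp]
    have := add_one_le_exp (b / N)
    have : (N : ℝ) ^ 2 * (b / N + 1) = b * N + N * N := by field_simp
    nlinarith
  have hnorm : ‖z‖ ≤ N * exp (b / (2 * N)) :=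
    (pow_le_pow_iff_left₀ (norm_nonneg z) (by positivity) two_ne_zero).mp hsq
  have hexp : (N + 1) * (b / (2 * N)) ≤ b := by
    rw [← mul_div_assoc, div_le_iff₀ (by positivity)]
    nlinarith [(show (1 : ℝ) ≤ N by exact_mod_cast Nat.one_le_iff_ne_zero.mpr hN)]
  calc ‖z‖ ^ (N + 1) ≤ (N * exp (b / (2 * N))) ^ (N + 1) := by gcongr
    _ = N ^ (N + 1) * exp ((N + 1) * (b / (2 * N))) := by
        rw [mul_pow, ← exp_nat_mul]; push_cast; ring_nf
    _ ≤ N ^ (N + 1) * exp b := by gcongr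

lemma norm_pow_succ_div_factorial_le (hz : ‖z‖ ^ (N + 1) ≤ N ^ (N + 1) * exp b) :
    ‖z‖ ^ (N + 1) / N ! ≤ N * exp (N + b) := by
  calc ‖z‖ ^ (N + 1) / N ! ≤ N ^ (N + 1) * exp b / N ! := by gcongr
    _ = N * (N ^ N / N !) * exp b := by ring
    _ ≤ N * exp N * exp b := by gcongr; exact pow_div_factorial_le_exp _ (Nat.cast_nonneg _) _
    _ = N * exp (N + b) := by rw [exp_add, mul_assoc]

lemma pow_mul_norm_postWidderKernel_le (r : ℕ) (hN : N ≠ 0) (hre : z.re = N)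
    (hz : ‖z‖ ^ (N + 1) ≤ N ^ (N + 1) * exp b) {t : ℝ} (ht : 0 ≤ t)
    (hdecay : t * exp (-t) ≤ exp (-(1 + η))) :
    t ^ r * ‖postWidderKernel z N t‖ ≤
      exp (b + 1 + η) * (N * exp (-(η * N))) * (exp (-t) * t ^ (r + 1)) := by
  obtain ⟨n, rfl⟩ := Nat.exists_eq_succ_of_ne_zero hN
  have hsplit : t ^ r * (t ^ (n + 1) * exp (-((n + 1 : ℕ) * t))) =
      (t * exp (-t)) ^ n * (exp (-t) * t ^ (r + 1)) := by
    have : exp (-((n + 1 : ℕ) * t)) = exp (-t) ^ (n + 1) := by rw [← exp_nat_mul]; ring_nf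
    rw [this]; ring
  have hpow : (t * exp (-t)) ^ n ≤ exp (-(1 + η)) ^ n :=
    pow_le_pow_left₀ (by positivity) hdecay n
  calc t ^ r * ‖postWidderKernel z (n + 1) t‖
      = ‖z‖ ^ (n + 1 + 1) / (n + 1)! * ((t * exp (-t)) ^ n * (exp (-t) * t ^ (r + 1))) := by
        rw [norm_postWidderKernel z _ ht, hre, ← hsplit]; ring
    _ ≤ (n + 1 : ℕ) * exp ((n + 1 : ℕ) + b) *
          (exp (-(1 + η)) ^ n * (exp (-t) * t ^ (r + 1))) := by
        gcongr
        exact norm_pow_succ_div_factorial_le hz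
    _ = _ := by
        have hexp : exp (-(1 + η)) ^ n * exp ((n + 1 : ℕ) + b) =
            exp (b + 1 + η) * exp (-(η * (n + 1 : ℕ))) := by
          rw [← exp_nat_mul, ← exp_add, ← exp_add]; push_cast; ring_nf
        linear_combination ((n + 1 : ℕ) * (exp (-t) * t ^ (r + 1))) * hexp

lemma setIntegral_pow_mul_norm_postWidderKernel_le {S : Set ℝ} (hS : MeasurableSet S)
    (hS0 : S ⊆ Ici 0) (r : ℕ) (hN : N ≠ 0) (hre : z.re = N)
    (hz : ‖z‖ ^ (N + 1) ≤ N ^ (N + 1) * exp b)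
    (hdecay : ∀ t ∈ S, t * exp (-t) ≤ exp (-(1 + η))) :
    ∫ t in S, t ^ r * ‖postWidderKernel z N t‖ ≤
      exp (b + 1 + η) * (N * exp (-(η * N))) * (r + 1)! := by
  set C := exp (b + 1 + η) * (N * exp (-(η * N)))
  have hint : IntegrableOn (fun t => C * (exp (-t) * t ^ (r + 1))) (Ici 0) :=
    ((integrableOn_Ici_iff_integrableOn_Ioi).mpr <| integrableOn_exp_neg_mul_pow_Ioi _).const_mul C
  calc ∫ t in S, t ^ r * ‖postWidderKernel z N t‖
      ≤ ∫ t in S, C * (exp (-t) * t ^ (r + 1)) := by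
        refine integral_mono_of_nonneg (ae_restrict_of_forall_mem hS fun t ht => ?_)
          (hint.mono_set hS0) (ae_restrict_of_forall_mem hS fun t ht => ?_)
        · have : 0 ≤ t := hS0 ht
          positivity
        · exact pow_mul_norm_postWidderKernel_le r hN hre hz (hS0 ht) (hdecay t ht)
    _ ≤ ∫ t in Ici 0, C * (exp (-t) * t ^ (r + 1)) := by
        refine setIntegral_mono_set hint
          (ae_restrict_of_forall_mem measurableSet_Ici fun t (ht : 0 ≤ t) => ?_) hS0.eventuallyLE
        positivity
    _ = C * (r + 1)! := by
        rw [integral_Ici_eq_integral_Ioi, integral_const_mul, integral_exp_neg_mul_pow_Ioi]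

end Kernel

/-- exponential tail bound for the generalized Post-Widder kernel
away from `t = 1`. -/
theorem stmt_12 (x : ℝ) (hx : 0 < x) (c : ℝ → ℝ)
    (hc : Filter.IsBoundedUnder (· ≤ ·) Filter.atTop (fun y => c y ^ 2 / y))
    (K : ℕ → ℝ → ℂ)
    (hK : ∀ (N : ℕ) (t : ℝ), K N t =
      (((N : ℂ) + Complex.I * x * c (N / x)) ^ (N + 1) / (Nat.factorial N : ℂ)) *
        (t : ℂ) ^ N * Complex.exp (-((N : ℂ) + Complex.I * x * c (N / x)) * t))
    (δ : ℝ) (hδ0 : 0 < δ) (hδ1 : δ < 1) :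
    ∃ (N₀ : ℕ) (C : ℝ), 0 < C ∧ ∀ N > N₀, ∀ r ∈ ({0, 1, 2} : Set ℕ),
      (∫ t in {t : ℝ | 0 ≤ t ∧ δ ≤ |t - 1|}, t ^ r * ‖K N t‖) ≤
        C * Real.exp (N * (Real.log (1 + δ) - δ) / 8) := by
  obtain ⟨B, N₀, hB⟩ := exists_sq_mul_le_of_isBoundedUnder hc hx
  set η := δ - log (1 + δ)
  have hη : 0 < η := by
    have := log_lt_sub_one_of_pos (x := 1 + δ) (by linarith) (by linarith)
    linarith
  have hS : MeasurableSet {t : ℝ | 0 ≤ t ∧ δ ≤ |t - 1|} :=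
    measurableSet_Ici.inter <|
      measurableSet_le measurable_const (measurable_id.sub measurable_const).abs
  have hη' : 0 < η - η / 8 := by linarith
  refine ⟨N₀, 6 * exp (B + 1 + η) / (η - η / 8), by positivity, fun N hN r hr => ?_⟩
  have hN0 : N ≠ 0 := by omega
  set z : ℂ := N + Complex.I * x * c (N / x)
  have hre : z.re = N := by simp [z]
  have hz := norm_pow_succ_le_of_sq_im_le hN0 hre (by simpa [z] using hB N hN)
  have hfac : ((r + 1)! : ℝ) ≤ 6 := by
    rcases hr with rfl | rfl | rfl <;> norm_num [Nat.factorial]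
  rw [show K N = postWidderKernel z N from funext (hK N)]
  calc _ ≤ exp (B + 1 + η) * (N * exp (-(η * N))) * (r + 1)! :=
        setIntegral_pow_mul_norm_postWidderKernel_le hS (fun t ht => ht.1) r hN0 hre hz
          fun t ht => mul_exp_neg_le_of_le_abs_sub_one hδ0.le hδ1 ht.1 ht.2
    _ ≤ exp (B + 1 + η) * (exp (-(η / 8 * N)) / (η - η / 8)) * 6 := by
        gcongr
        exact mul_exp_neg_mul_le (by linarith) _
    _ = _ := by
        rw [show -(η / 8 * N) = N * (log (1 + δ) - δ) / 8 by ring]; ring
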